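/- arXiv:2306.08594 — 2 statements merged into one kernel-verified Lean document; each statement's English description precedes it below -/
import Mathlib

section
/- Let G be a strongly connected directed graph with all distances between distinct vertices at most 2, and let V1, V2 ⊆ V(G) be disjoint vertex sets with no edges of G between V1 and V2 in either direction. Let R1 ⊆ V1 and R2 ⊆ V2 be nonempty. If there exists a 2-vertex u1 ∈ V1 \ R1 w.r.t. R1 and a 2-vertex u2 ∈ V2 \ R2 w.r.t. R2, then R1 ∪ R2 does not resolve V1 ∪ V2 in G (the pair u1, u2 is unresolved). -/
universe u

/-- There is a directed walk of length `n` from `u` to `v` in the digraph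
with edge relation `E`. -/
def HasWalkLen {V : Type u} (E : V → V → Prop) (u v : V) (n : ℕ) : Prop :=
  ∃ f : Fin (n + 1) → V, f 0 = u ∧ f (Fin.last n) = v ∧
    ∀ i : Fin n, E (f i.castSucc) (f i.succ)

/-- `v` is reachable from `u` by a directed walk. -/
def Reaches {V : Type u} (E : V → V → Prop) (u v : V) : Prop :=
  ∃ n, HasWalkLen E u v n

/-- Directed distance from `u` to `v` (length of a shortest directed path);
a junk value (`sInf ∅ = 0`) if `v` is unreachable from `u`. -/
noncomputable def ddist {V : Type u} (E : V → V → Prop) (u v : V) : ℕ :=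
  sInf {n | HasWalkLen E u v n}

/-- `w` resolves the vertices `u` and `v`: `w = u`, or `w = v`, or both
distances from `w` are defined (reachable) and different. -/
def Resolves {V : Type u} (E : V → V → Prop) (w u v : V) : Prop :=
  w = u ∨ w = v ∨
    (Reaches E w u ∧ Reaches E w v ∧ ddist E w u ≠ ddist E w v)

/-- `R` resolves the vertex set `U`: every pair of distinct vertices of `U`
is resolved by some member of `R`. -/
def ResolvesSet {V : Type u} (E : V → V → Prop) (R U : Set V) : Prop :=
  ∀ u ∈ U, ∀ v ∈ U, u ≠ v → ∃ w ∈ R, Resolves E w u v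

/-- The digraph is strongly connected on the vertex set `S`. -/
def SConn {V : Type u} (E : V → V → Prop) (S : Set V) : Prop :=
  ∀ u ∈ S, ∀ v ∈ S, Reaches E u v

/-- `u` is a 1-vertex w.r.t. `R`: `u ∉ R` and every `w ∈ R` has an edge to `u`. -/
def OneVertex {V : Type u} (E : V → V → Prop) (R : Set V) (u : V) : Prop :=
  u ∉ R ∧ ∀ w ∈ R, E w u

/-- `u` is a 2-vertex w.r.t. `R`: `u ∉ R` and no `w ∈ R` has an edge to `u`. -/
def TwoVertex {V : Type u} (E : V → V → Prop) (R : Set V) (u : V) : Prop :=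
  u ∉ R ∧ ∀ w ∈ R, ¬ E w u

/-- Directed co-graphs with vertex set `S` and edge relation `E`, built
inductively from single vertices by disjoint union, join and directed join. -/
inductive IsDicograph {V : Type u} : Set V → (V → V → Prop) → Prop
  | single (v : V) : IsDicograph {v} fun _ _ => False
  | disjUnion {S₁ S₂ : Set V} {E₁ E₂ : V → V → Prop} :
      IsDicograph S₁ E₁ → IsDicograph S₂ E₂ → Disjoint S₁ S₂ →
      IsDicograph (S₁ ∪ S₂) fun u v => E₁ u v ∨ E₂ u v
  | join {S₁ S₂ : Set V} {E₁ E₂ : V → V → Prop} :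
      IsDicograph S₁ E₁ → IsDicograph S₂ E₂ → Disjoint S₁ S₂ →
      IsDicograph (S₁ ∪ S₂) fun u v =>
        E₁ u v ∨ E₂ u v ∨ (u ∈ S₁ ∧ v ∈ S₂) ∨ (u ∈ S₂ ∧ v ∈ S₁)
  | dirJoin {S₁ S₂ : Set V} {E₁ E₂ : V → V → Prop} :
      IsDicograph S₁ E₁ → IsDicograph S₂ E₂ → Disjoint S₁ S₂ →
      IsDicograph (S₁ ∪ S₂) fun u v => E₁ u v ∨ E₂ u v ∨ (u ∈ S₁ ∧ v ∈ S₂)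

/-! In a strongly connected digraph of diameter at most 2, a vertex adjacent to neither `u` nor
`v` sees both at distance exactly 2. A landmark of `R₁` is adjacent to neither `u₁` (a 2-vertex)
nor `u₂` (no edges between the parts), and symmetrically for `R₂`, so no landmark separates
`u₁` from `u₂`. -/

section Distance

variable {V : Type u} {E : V → V → Prop} {u v : V}

theorem hasWalkLen_zero_iff : HasWalkLen E u v 0 ↔ u = v :=
  ⟨fun ⟨_, h0, hl, _⟩ => h0 ▸ hl ▸ rfl, fun h => ⟨fun _ => u, rfl, h, Fin.elim0⟩⟩

theorem hasWalkLen_one_iff : HasWalkLen E u v 1 ↔ E u v := by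
  constructor
  · rintro ⟨f, h0, hl, hE⟩
    rw [← h0, ← hl]
    exact hE 0
  · intro h
    refine ⟨![u, v], rfl, rfl, fun i => ?_⟩
    fin_cases i
    simpa using h

theorem Reaches.hasWalkLen_ddist (h : Reaches E u v) : HasWalkLen E u v (ddist E u v) :=
  Nat.sInf_mem h

theorem ddist_eq_two_of_not_adj (hreach : Reaches E u v) (hle : ddist E u v ≤ 2) (hne : u ≠ v)
    (hnE : ¬ E u v) : ddist E u v = 2 := by
  have hwalk := hreach.hasWalkLen_ddist
  have h0 : ddist E u v ≠ 0 := fun h => hne (hasWalkLen_zero_iff.mp (h ▸ hwalk))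
  have h1 : ddist E u v ≠ 1 := fun h => hnE (hasWalkLen_one_iff.mp (h ▸ hwalk))
  omega

theorem not_resolves_of_not_adj (hsc : SConn E Set.univ)
    (hdiam : ∀ u v : V, u ≠ v → ddist E u v ≤ 2) {w : V} (hwu : w ≠ u) (hwv : w ≠ v)
    (hu : ¬ E w u) (hv : ¬ E w v) : ¬ Resolves E w u v := by
  have hdu := ddist_eq_two_of_not_adj (hsc w trivial u trivial) (hdiam w u hwu) hwu hu
  have hdv := ddist_eq_two_of_not_adj (hsc w trivial v trivial) (hdiam w v hwv) hwv hv
  rintro (h | h | ⟨-, -, h⟩)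
  exacts [hwu h, hwv h, h (hdu.trans hdv.symm)]

end Distance

theorem stmt_5_general {V : Type u} {E : V → V → Prop}
    (hsc : SConn E Set.univ)
    (hdiam : ∀ u v : V, u ≠ v → ddist E u v ≤ 2)
    {V₁ V₂ R₁ R₂ : Set V}
    (hdisj : Disjoint V₁ V₂)
    (hnoedge : ∀ x ∈ V₁, ∀ y ∈ V₂, ¬ E x y ∧ ¬ E y x)
    (hR₁ : R₁ ⊆ V₁) (hR₂ : R₂ ⊆ V₂)
    {u₁ u₂ : V} (hu₁ : u₁ ∈ V₁) (h2v₁ : TwoVertex E R₁ u₁)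
    (hu₂ : u₂ ∈ V₂) (h2v₂ : TwoVertex E R₂ u₂) :
    (∀ w ∈ R₁ ∪ R₂, ¬ Resolves E w u₁ u₂) ∧
    ¬ ResolvesSet E (R₁ ∪ R₂) (V₁ ∪ V₂) := by
  have unresolved : ∀ w ∈ R₁ ∪ R₂, ¬ Resolves E w u₁ u₂ := by
    rintro w (hw | hw)
    · have hwV₁ := hR₁ hw
      exact not_resolves_of_not_adj hsc hdiam (ne_of_mem_of_not_mem hw h2v₁.1)
        (hdisj.ne_of_mem hwV₁ hu₂) (h2v₁.2 w hw) (hnoedge w hwV₁ u₂ hu₂).1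
    · have hwV₂ := hR₂ hw
      exact not_resolves_of_not_adj hsc hdiam (hdisj.ne_of_mem hu₁ hwV₂).symm
        (ne_of_mem_of_not_mem hw h2v₂.1) (hnoedge u₁ hu₁ w hwV₂).2 (h2v₂.2 w hw)
  refine ⟨unresolved, fun hres => ?_⟩
  obtain ⟨w, hw, hwres⟩ := hres u₁ (.inl hu₁) u₂ (.inr hu₂) (hdisj.ne_of_mem hu₁ hu₂)
  exact unresolved w hw hwres

/-- Disjoint union case, negative direction: a 2-vertex on each side leaves
the pair unresolved. -/
theorem stmt_5 {V : Type u} {E : V → V → Prop}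
    (hsc : SConn E Set.univ)
    (hdiam : ∀ u v : V, u ≠ v → ddist E u v ≤ 2)
    {V₁ V₂ R₁ R₂ : Set V}
    (hdisj : Disjoint V₁ V₂)
    (hnoedge : ∀ x ∈ V₁, ∀ y ∈ V₂, ¬ E x y ∧ ¬ E y x)
    (hR₁ : R₁ ⊆ V₁) (hR₂ : R₂ ⊆ V₂)
    (hR₁ne : R₁.Nonempty) (hR₂ne : R₂.Nonempty)
    {u₁ u₂ : V} (hu₁ : u₁ ∈ V₁) (hu₁R : u₁ ∉ R₁) (h2v₁ : TwoVertex E R₁ u₁)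
    (hu₂ : u₂ ∈ V₂) (hu₂R : u₂ ∉ R₂) (h2v₂ : TwoVertex E R₂ u₂) :
    (∀ w ∈ R₁ ∪ R₂, ¬ Resolves E w u₁ u₂) ∧
    ¬ ResolvesSet E (R₁ ∪ R₂) (V₁ ∪ V₂) :=
  stmt_5_general hsc hdiam hdisj hnoedge hR₁ hR₂ hu₁ h2v₁ hu₂ h2v₂
end

section
/- No directed co-graph G contains five distinct vertices u1, v, u2, w1, w2 such that (w1,u1), (w2,u1), (w2,v), (v,u2) ∈ E(G) and (w1,u2), (w1,v), (w2,u2), (v,u1) ∉ E(G). -/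
universe u

/-! A directed co-graph is built by a last operation from two parts `S₁`, `S₂`, and whatever that
operation is, all edges from `S₁` to `S₂` are alike, and so are all edges from `S₂` to `S₁`. The
configuration cannot straddle such a split: wherever `w₁` lies, the edges `w₁ → u₁`, `w₂ → u₁`,
`w₂ → v`, `v → u₂` and the non-edges `w₁ ↛ u₂`, `w₁ ↛ v`, `w₂ ↛ u₂`, `v ↛ u₁` force the other four
vertices into the same part. So the configuration would already occur in one of the parts, and
induction on the construction finishes the proof, a single vertex having no edges at all. -/

variable {V : Type u}

def IsForbiddenConfig (E : V → V → Prop) (u₁ v u₂ w₁ w₂ : V) : Prop :=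
  E w₁ u₁ ∧ E w₂ u₁ ∧ E w₂ v ∧ E v u₂ ∧ ¬E w₁ u₂ ∧ ¬E w₁ v ∧ ¬E w₂ u₂ ∧ ¬E v u₁

def CrossUniform (E : V → V → Prop) (S₁ S₂ : Set V) : Prop :=
  ∃ p q : Prop, ∀ a ∈ S₁, ∀ b ∈ S₂, (E a b ↔ p) ∧ (E b a ↔ q)

namespace CrossUniform

variable {E : V → V → Prop} {S₁ S₂ : Set V}

theorem symm (hc : CrossUniform E S₁ S₂) : CrossUniform E S₂ S₁ :=
  let ⟨p, q, hpq⟩ := hc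
  ⟨q, p, fun b hb a ha => (hpq a ha b hb).symm⟩

theorem edge_iff (hc : CrossUniform E S₁ S₂) {a a' b b' : V} (ha : a ∈ S₁) (hb : b ∈ S₂)
    (ha' : a' ∈ S₁) (hb' : b' ∈ S₂) : E a b ↔ E a' b' :=
  let ⟨_, _, hpq⟩ := hc
  (hpq a ha b hb).1.trans (hpq a' ha' b' hb').1.symm

end CrossUniform

namespace IsForbiddenConfig

variable {E E' : V → V → Prop} {u₁ v u₂ w₁ w₂ : V}

theorem mem (h : IsForbiddenConfig E u₁ v u₂ w₁ w₂) {T : Set V}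
    (hE : ∀ ⦃a b⦄, E a b → a ∈ T ∧ b ∈ T) :
    u₁ ∈ T ∧ v ∈ T ∧ u₂ ∈ T ∧ w₁ ∈ T ∧ w₂ ∈ T :=
  ⟨(hE h.1).2, (hE h.2.2.1).2, (hE h.2.2.2.1).2, (hE h.1).1, (hE h.2.1).1⟩

theorem of_edge_iff (h : IsForbiddenConfig E u₁ v u₂ w₁ w₂) {T : Set V}
    (hT : u₁ ∈ T ∧ v ∈ T ∧ u₂ ∈ T ∧ w₁ ∈ T ∧ w₂ ∈ T)
    (hEE' : ∀ a ∈ T, ∀ b ∈ T, E a b ↔ E' a b) : IsForbiddenConfig E' u₁ v u₂ w₁ w₂ := by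
  obtain ⟨hu₁, hv, hu₂, hw₁, hw₂⟩ := hT
  obtain ⟨e₁, e₂, e₃, e₄, n₁, n₂, n₃, n₄⟩ := h
  exact ⟨(hEE' _ hw₁ _ hu₁).1 e₁, (hEE' _ hw₂ _ hu₁).1 e₂, (hEE' _ hw₂ _ hv).1 e₃,
    (hEE' _ hv _ hu₂).1 e₄, mt (hEE' _ hw₁ _ hu₂).2 n₁, mt (hEE' _ hw₁ _ hv).2 n₂,
    mt (hEE' _ hw₂ _ hu₂).2 n₃, mt (hEE' _ hv _ hu₁).2 n₄⟩

theorem mem_left_of_crossUniform (h : IsForbiddenConfig E u₁ v u₂ w₁ w₂) {S₁ S₂ : Set V}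
    (hc : CrossUniform E S₁ S₂) (hw₁ : w₁ ∈ S₁) (hu₁ : u₁ ∈ S₁ ∨ u₁ ∈ S₂)
    (hv : v ∈ S₁ ∨ v ∈ S₂) (hu₂ : u₂ ∈ S₁ ∨ u₂ ∈ S₂) (hw₂ : w₂ ∈ S₁ ∨ w₂ ∈ S₂) :
    u₁ ∈ S₁ ∧ v ∈ S₁ ∧ u₂ ∈ S₁ ∧ w₂ ∈ S₁ := by
  obtain ⟨e₁, e₂, e₃, e₄, n₁, n₂, n₃, n₄⟩ := h
  have hu₁ : u₁ ∈ S₁ := hu₁.resolve_right fun hu₁ => by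
    rcases hv with hv | hv
    · exact n₄ ((hc.edge_iff hw₁ hu₁ hv hu₁).1 e₁)
    · exact n₂ ((hc.edge_iff hw₁ hu₁ hw₁ hv).1 e₁)
  have hv : v ∈ S₁ := hv.resolve_right fun hv => by
    rcases hw₂ with hw₂ | hw₂
    · exact n₂ ((hc.edge_iff hw₂ hv hw₁ hv).1 e₃)
    · exact n₄ ((hc.symm.edge_iff hw₂ hu₁ hv hu₁).1 e₂)
  have hu₂ : u₂ ∈ S₁ := hu₂.resolve_right fun hu₂ =>
    n₁ ((hc.edge_iff hv hu₂ hw₁ hu₂).1 e₄)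
  have hw₂ : w₂ ∈ S₁ := hw₂.resolve_right fun hw₂ =>
    n₃ ((hc.symm.edge_iff hw₂ hu₁ hw₂ hu₂).1 e₂)
  exact ⟨hu₁, hv, hu₂, hw₂⟩

end IsForbiddenConfig

theorem not_isForbiddenConfig_of_crossUniform {S₁ S₂ : Set V} {E E₁ E₂ : V → V → Prop}
    {u₁ v u₂ w₁ w₂ : V} (hE : ∀ ⦃a b⦄, E a b → a ∈ S₁ ∪ S₂ ∧ b ∈ S₁ ∪ S₂)
    (hc : CrossUniform E S₁ S₂) (hE₁ : ∀ a ∈ S₁, ∀ b ∈ S₁, E a b ↔ E₁ a b)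
    (hE₂ : ∀ a ∈ S₂, ∀ b ∈ S₂, E a b ↔ E₂ a b) (h₁ : ¬IsForbiddenConfig E₁ u₁ v u₂ w₁ w₂)
    (h₂ : ¬IsForbiddenConfig E₂ u₁ v u₂ w₁ w₂) : ¬IsForbiddenConfig E u₁ v u₂ w₁ w₂ := by
  intro h
  obtain ⟨hu₁, hv, hu₂, hw₁, hw₂⟩ := h.mem hE
  rcases hw₁ with hw₁ | hw₁
  · obtain ⟨hu₁, hv, hu₂, hw₂⟩ := h.mem_left_of_crossUniform hc hw₁ hu₁ hv hu₂ hw₂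
    exact h₁ (h.of_edge_iff ⟨hu₁, hv, hu₂, hw₁, hw₂⟩ hE₁)
  · obtain ⟨hu₁, hv, hu₂, hw₂⟩ :=
      h.mem_left_of_crossUniform hc.symm hw₁ hu₁.symm hv.symm hu₂.symm hw₂.symm
    exact h₂ (h.of_edge_iff ⟨hu₁, hv, hu₂, hw₁, hw₂⟩ hE₂)

namespace IsDicograph

variable {S S₁ S₂ : Set V} {E E₁ E₂ : V → V → Prop}

theorem mem_of_edge (h : IsDicograph S E) ⦃a b : V⦄ (hab : E a b) : a ∈ S ∧ b ∈ S := by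
  induction h with
  | single x => exact hab.elim
  | disjUnion _ _ _ ih₁ ih₂ =>
    rcases hab with h | h
    · exact ⟨.inl (ih₁ h).1, .inl (ih₁ h).2⟩
    · exact ⟨.inr (ih₂ h).1, .inr (ih₂ h).2⟩
  | join _ _ _ ih₁ ih₂ =>
    rcases hab with h | h | ⟨ha, hb⟩ | ⟨ha, hb⟩
    · exact ⟨.inl (ih₁ h).1, .inl (ih₁ h).2⟩
    · exact ⟨.inr (ih₂ h).1, .inr (ih₂ h).2⟩
    · exact ⟨.inl ha, .inr hb⟩
    · exact ⟨.inr ha, .inl hb⟩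
  | dirJoin _ _ _ ih₁ ih₂ =>
    rcases hab with h | h | ⟨ha, hb⟩
    · exact ⟨.inl (ih₁ h).1, .inl (ih₁ h).2⟩
    · exact ⟨.inr (ih₂ h).1, .inr (ih₂ h).2⟩
    · exact ⟨.inl ha, .inr hb⟩

theorem not_edge_of_not_mem_left (h : IsDicograph S E) ⦃a b : V⦄ (ha : a ∉ S) : ¬E a b :=
  fun hab => ha (h.mem_of_edge hab).1

theorem not_edge_of_not_mem_right (h : IsDicograph S E) ⦃a b : V⦄ (hb : b ∉ S) : ¬E a b :=
  fun hab => hb (h.mem_of_edge hab).2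

theorem not_isForbiddenConfig_of_composition (h₁ : IsDicograph S₁ E₁) (h₂ : IsDicograph S₂ E₂)
    (hd : Disjoint S₁ S₂) (p q : Prop)
    (hE : ∀ a b, E a b ↔ E₁ a b ∨ E₂ a b ∨ (p ∧ a ∈ S₁ ∧ b ∈ S₂) ∨ (q ∧ a ∈ S₂ ∧ b ∈ S₁))
    {u₁ v u₂ w₁ w₂ : V} (ih₁ : ¬IsForbiddenConfig E₁ u₁ v u₂ w₁ w₂)
    (ih₂ : ¬IsForbiddenConfig E₂ u₁ v u₂ w₁ w₂) : ¬IsForbiddenConfig E u₁ v u₂ w₁ w₂ := by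
  refine not_isForbiddenConfig_of_crossUniform (S₁ := S₁) (S₂ := S₂) (fun a b hab => ?_)
    ⟨p, q, ?_⟩ ?_ ?_ ih₁ ih₂
  · rcases (hE a b).1 hab with h | h | ⟨-, ha, hb⟩ | ⟨-, ha, hb⟩
    · exact ⟨.inl (h₁.mem_of_edge h).1, .inl (h₁.mem_of_edge h).2⟩
    · exact ⟨.inr (h₂.mem_of_edge h).1, .inr (h₂.mem_of_edge h).2⟩
    · exact ⟨.inl ha, .inr hb⟩
    · exact ⟨.inr ha, .inl hb⟩
  all_goals
    intro a ha b hb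
    simp [hE, ha, hb, h₁.not_edge_of_not_mem_left, h₁.not_edge_of_not_mem_right,
      h₂.not_edge_of_not_mem_left, h₂.not_edge_of_not_mem_right, Set.disjoint_left.1 hd,
      Set.disjoint_right.1 hd]

theorem not_isForbiddenConfig (hG : IsDicograph S E) (u₁ v u₂ w₁ w₂ : V) :
    ¬IsForbiddenConfig E u₁ v u₂ w₁ w₂ := by
  induction hG with
  | single => exact fun h => h.1
  | disjUnion h₁ h₂ hd ih₁ ih₂ =>
    exact not_isForbiddenConfig_of_composition h₁ h₂ hd False False (by simp) ih₁ ih₂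
  | join h₁ h₂ hd ih₁ ih₂ =>
    exact not_isForbiddenConfig_of_composition h₁ h₂ hd True True (by simp) ih₁ ih₂
  | dirJoin h₁ h₂ hd ih₁ ih₂ =>
    exact not_isForbiddenConfig_of_composition h₁ h₂ hd True False (by simp) ih₁ ih₂

end IsDicograph

/-- No directed co-graph contains the five-vertex configuration of
Figure 6. -/
theorem stmt_10 {V : Type u} {S : Set V} {E : V → V → Prop}
    (hG : IsDicograph S E) :
    ¬ ∃ u₁ v u₂ w₁ w₂ : V,
      u₁ ∈ S ∧ v ∈ S ∧ u₂ ∈ S ∧ w₁ ∈ S ∧ w₂ ∈ S ∧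
      u₁ ≠ v ∧ u₁ ≠ u₂ ∧ u₁ ≠ w₁ ∧ u₁ ≠ w₂ ∧
      v ≠ u₂ ∧ v ≠ w₁ ∧ v ≠ w₂ ∧
      u₂ ≠ w₁ ∧ u₂ ≠ w₂ ∧ w₁ ≠ w₂ ∧
      E w₁ u₁ ∧ E w₂ u₁ ∧ E w₂ v ∧ E v u₂ ∧
      ¬ E w₁ u₂ ∧ ¬ E w₁ v ∧ ¬ E w₂ u₂ ∧ ¬ E v u₁ := by
  rintro ⟨u₁, v, u₂, w₁, w₂, -, -, -, -, -, -, -, -, -, -, -, -, -, -, -, hconfig⟩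
  exact hG.not_isForbiddenConfig u₁ v u₂ w₁ w₂ hconfig
end
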